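/- arXiv:1605.04893 — 2 statements merged into one kernel-verified Lean document; each statement's English description precedes it below -/
import Mathlib

section
/- Let A be an n×n Hermitian positive semi-definite matrix and Q an n×ℓ matrix with orthonormal columns. Then det(I_ℓ + Q* A Q) ≤ det(I_n + A), and hence log det(I_ℓ + Q* A Q) ≤ log det(I_n + A). -/
/-!
With `B = √A`, Sylvester's identity gives `det (1 + Qᴴ A Q) = det (1 + B Q Qᴴ B)`, and since
`Q Qᴴ` is an orthogonal projection, `B Q Qᴴ B ≤ B B = A` in the Loewner order. The determinant is
monotone in that order: conjugating by the inverse square root of the larger matrix reduces this to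
`0 ≤ W ≤ 1 → det W ≤ 1`, which holds because the eigenvalues of such a `W` lie in `[0, 1]`.
-/

open Matrix
open scoped ComplexOrder

namespace Matrix

open scoped MatrixOrder

variable {n m 𝕜 : Type*} [Fintype n] [DecidableEq n] [Fintype m] [DecidableEq m] [RCLike 𝕜]

lemma IsHermitian.eigenvalues_le_one {W : Matrix n n 𝕜} (hW : W.IsHermitian) (h : W ≤ 1) (i : n) :
    hW.eigenvalues i ≤ 1 :=
  (le_algebraMap_iff_spectrum_le (R := ℝ) (a := W) hW.isSelfAdjoint).mp (by simpa using h) _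
    (hW.eigenvalues_mem_spectrum_real i)

lemma det_le_one_of_nonneg_of_le_one {W : Matrix n n 𝕜} (h₀ : 0 ≤ W) (h₁ : W ≤ 1) : W.det ≤ 1 := by
  have hW := h₀.posSemidef
  rw [hW.isHermitian.det_eq_prod_eigenvalues, ← RCLike.ofReal_prod, ← RCLike.ofReal_one,
    RCLike.ofReal_le_ofReal]
  exact Finset.prod_le_one (fun i _ ↦ hW.eigenvalues_nonneg i)
    fun i _ ↦ hW.isHermitian.eigenvalues_le_one h₁ i

lemma det_le_det_of_le {X Y : Matrix n n 𝕜} (hX : 0 ≤ X) (hY : Y.PosDef) (hXY : X ≤ Y) :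
    X.det ≤ Y.det := by
  set S := CFC.sqrt Y
  have hSS : S * S = Y := CFC.sqrt_mul_sqrt_self Y hY.posSemidef.nonneg
  have hS : star S = S := (CFC.sqrt_nonneg Y).isSelfAdjoint
  have hSu : IsUnit S.det := by
    rw [← isUnit_iff_isUnit_det, CFC.isUnit_sqrt_iff Y hY.posSemidef.nonneg]
    exact hY.isUnit
  have hT : star S⁻¹ = S⁻¹ := by
    rw [star_eq_conjTranspose, conjTranspose_nonsing_inv, ← star_eq_conjTranspose, hS]
  set W := S⁻¹ * X * S⁻¹
  have hW₀ : 0 ≤ W := by simpa only [hT] using star_left_conjugate_nonneg hX S⁻¹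
  have hW₁ : W ≤ 1 := by
    calc W ≤ S⁻¹ * Y * S⁻¹ := by simpa only [hT] using star_left_conjugate_le_conjugate hXY S⁻¹
      _ = 1 := by
        rw [← hSS, ← mul_assoc, nonsing_inv_mul _ hSu, Matrix.one_mul, mul_nonsing_inv _ hSu]
  have hXW : X = S * W * S := by
    rw [← mul_assoc, mul_nonsing_inv_cancel_left _ _ hSu, nonsing_inv_mul_cancel_right _ _ hSu]
  clear_value W
  have hdet : X.det = Y.det * W.det := by
    rw [hXW, ← hSS, det_mul, det_mul, det_mul]; ring
  rw [hdet]
  exact mul_le_of_le_one_right hY.det_pos.le (det_le_one_of_nonneg_of_le_one hW₀ hW₁)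

lemma mul_conjTranspose_le_one {Q : Matrix n m 𝕜} (hQ : Qᴴ * Q = 1) : Q * Qᴴ ≤ 1 := by
  have hP : (1 - Q * Qᴴ)ᴴ * (1 - Q * Qᴴ) = 1 - Q * Qᴴ := by
    simp only [conjTranspose_sub, conjTranspose_one, conjTranspose_mul, conjTranspose_conjTranspose,
      Matrix.sub_mul, Matrix.mul_sub, Matrix.one_mul, Matrix.mul_one, Matrix.mul_assoc]
    rw [← Matrix.mul_assoc Qᴴ, hQ, Matrix.one_mul]
    abel
  rw [le_iff, ← hP]
  exact posSemidef_conjTranspose_mul_self _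

lemma det_one_add_conjTranspose_mul_mul_le {A : Matrix n n 𝕜} (hA : A.PosSemidef)
    {Q : Matrix n m 𝕜} (hQ : Qᴴ * Q = 1) : (1 + Qᴴ * A * Q).det ≤ (1 + A).det := by
  set B := CFC.sqrt A
  have hB : Bᴴ = B := (CFC.sqrt_nonneg A).isSelfAdjoint
  have hBB : B * B = A := CFC.sqrt_mul_sqrt_self A hA.nonneg
  have hQAQ : Qᴴ * A * Q = (B * Q)ᴴ * (B * Q) := by
    rw [conjTranspose_mul, hB, ← hBB]
    simp only [Matrix.mul_assoc]
  have hle : B * Q * (B * Q)ᴴ ≤ A :=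
    calc B * Q * (B * Q)ᴴ = star B * (Q * Qᴴ) * B := by
          rw [conjTranspose_mul, star_eq_conjTranspose, hB]
          simp only [Matrix.mul_assoc]
      _ ≤ star B * 1 * B := star_left_conjugate_le_conjugate (mul_conjTranspose_le_one hQ) B
      _ = A := by rw [star_eq_conjTranspose, hB, Matrix.mul_one, hBB]
  rw [hQAQ, det_one_add_mul_comm]
  exact det_le_det_of_le (add_nonneg zero_le_one (posSemidef_self_mul_conjTranspose _).nonneg)
    (PosDef.one.add_posSemidef hA) (add_le_add_right hle 1)

end Matrix

/-- If `A` is Hermitian positive semi-definite and `Q` has orthonormal columns, then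
`det(I_ℓ + Qᴴ A Q) ≤ det(I_n + A)`, and hence
`log det(I_ℓ + Qᴴ A Q) ≤ log det(I_n + A)`. -/
theorem det_compression_le {n ℓ : ℕ}
    (A : Matrix (Fin n) (Fin n) ℂ) (hA : A.PosSemidef)
    (Q : Matrix (Fin n) (Fin ℓ) ℂ) (hQ : Qᴴ * Q = 1) :
    (((1 : Matrix (Fin ℓ) (Fin ℓ) ℂ) + Qᴴ * A * Q).det).re ≤
      (((1 : Matrix (Fin n) (Fin n) ℂ) + A).det).re ∧
    Real.log (((1 : Matrix (Fin ℓ) (Fin ℓ) ℂ) + Qᴴ * A * Q).det).re ≤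
      Real.log (((1 : Matrix (Fin n) (Fin n) ℂ) + A).det).re := by
  have hle := (Complex.le_def.mp (det_one_add_conjTranspose_mul_mul_le hA hQ)).1
  have hpos := (PosDef.one.add_posSemidef (hA.conjTranspose_mul_mul_same Q)).det_pos
  exact ⟨hle, Real.log_le_log (Complex.pos_iff.mp hpos).1 hle⟩
end

section
/- Let A be an n×n Hermitian positive semi-definite matrix with eigenvalues λ_1 ≥ ... ≥ λ_n ≥ 0, let k ≤ ℓ ≤ n, and let Q be an n×ℓ matrix with orthonormal columns. Then log det(I_n + A) − log det(I_ℓ + Q* A Q) ≥ ∑_{j=k+1}^{n} log(1 + λ_j) − ∑_{j=k+1}^{ℓ} log(1 + λ_j) ≥ 0. -/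
/-!
Write `A = U diag(λ) U*` and `W = U* Q`, so that `W` has orthonormal columns and
`I + Q* A Q = W* diag(1 + λ) W`. By Cauchy–Binet, `det (W* diag(c) W)` is the sum over the
`ℓ`-element row sets `S` of `(∏_{j ∈ S} c_j) |det W_S|²`, and the weights `|det W_S|²` sum to
`det (W* W) = 1`. Hence `det (I + Q* A Q)` is a convex combination of the products
`∏_{j ∈ S} (1 + λ_j)`, each at least `1` and, as `λ` is decreasing, at most
`∏_{j ≤ ℓ} (1 + λ_j)`. Taking logarithms, the deficit is at least `∑_{j > ℓ} log (1 + λ_j)`,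
which is the difference of the two sums in the statement.
-/

open Matrix Finset
open scoped ComplexOrder

theorem StrictMono.comp_eq_comp_iff {β γ : Type*} [LinearOrder β] [Finite β] [Preorder γ]
    {g g' : β → γ} {h h' : β → β} (hg : StrictMono g) (hg' : StrictMono g')
    (hh : Function.Injective h) (hh' : Function.Injective h') :
    g ∘ h = g' ∘ h' ↔ g = g' ∧ h = h' := by
  refine ⟨fun hgh => ?_, fun ⟨rfl, rfl⟩ => rfl⟩
  have hrange : Set.range g = Set.range g' := by
    rw [← (Finite.surjective_of_injective hh).range_comp g,
      ← (Finite.surjective_of_injective hh').range_comp g', hgh]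
  obtain rfl := (hg.range_inj hg').mp hrange
  exact ⟨rfl, hg.injective.comp_left hgh⟩

theorem Function.Injective.exists_strictMono_comp_eq {l : ℕ} {n : Type*} [LinearOrder n]
    {f : Fin l → n} (hf : Function.Injective f) :
    ∃ g : Fin l → n, StrictMono g ∧ ∃ h : Fin l → Fin l, Function.Injective h ∧ g ∘ h = f := by
  classical
  have hcard : (univ.image f).card = l := by
    rw [card_image_of_injective _ hf, card_univ, Fintype.card_fin]
  set g := (univ.image f).orderEmbOfFin hcard
  have hmem : ∀ i, ∃ j, g j = f i := fun i => by
    rw [← Set.mem_range, range_orderEmbOfFin]; simp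
  choose h hh using hmem
  have hgh : ⇑g ∘ h = f := funext hh
  exact ⟨g, g.strictMono, h, fun i j hij => hf (by rw [← hh, ← hh, hij]), hgh⟩

theorem Fin.val_le_val_of_strictMono {l n : ℕ} {g : Fin l → Fin n} (hg : StrictMono g)
    (j : Fin l) : (j : ℕ) ≤ g j := by
  have h := card_le_card_of_injOn g (fun i hi => mem_Iic.mpr (hg.monotone (mem_Iic.mp hi)))
    hg.injective.injOn (s := Iic j)
  simpa [Fin.card_Iic] using h

theorem Fin.prod_comp_strictMono_le {R : Type*} [CommSemiring R] [PartialOrder R]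
    [IsOrderedRing R] {l n : ℕ} (h : l ≤ n) {d : Fin n → R} (hd : Antitone d)
    (hd0 : ∀ i, 0 ≤ d i) {g : Fin l → Fin n} (hg : StrictMono g) :
    ∏ j, d (g j) ≤ ∏ j, d (Fin.castLE h j) :=
  prod_le_prod (fun _ _ => hd0 _) fun j _ =>
    hd (Fin.le_def.mpr (Fin.val_le_val_of_strictMono hg j))

theorem Fin.sum_filter_val_lt {M : Type*} [AddCommMonoid M] {l n : ℕ} (h : l ≤ n)
    (f : Fin n → M) :
    ∑ i ∈ univ.filter (fun i : Fin n => (i : ℕ) < l), f i = ∑ j : Fin l, f (Fin.castLE h j) := by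
  have himage : univ.filter (fun i : Fin n => (i : ℕ) < l) = univ.map (Fin.castLEEmb h) := by
    ext i
    simp only [mem_filter, mem_univ, true_and, mem_map, Fin.castLEEmb_apply]
    exact ⟨fun hi => ⟨⟨i, hi⟩, rfl⟩, by rintro ⟨j, rfl⟩; exact j.2⟩
  rw [himage, sum_map]
  rfl

theorem Fin.sum_filter_le_sub_sum_filter_le_lt {M : Type*} [AddCommGroup M] {n k l : ℕ}
    (hkl : k ≤ l) (f : Fin n → M) :
    ∑ i ∈ univ.filter (fun i : Fin n => k ≤ (i : ℕ)), f i -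
      ∑ i ∈ univ.filter (fun i : Fin n => k ≤ (i : ℕ) ∧ (i : ℕ) < l), f i =
      ∑ i ∈ univ.filter (fun i : Fin n => l ≤ (i : ℕ)), f i := by
  rw [sub_eq_iff_eq_add', ← sum_filter_add_sum_filter_not _ (fun i : Fin n => (i : ℕ) < l),
    filter_filter, filter_filter]
  congr 2
  ext i
  simp only [mem_filter, mem_univ, true_and]
  omega

namespace Matrix

variable {R : Type*} [CommRing R]

theorem det_mul_eq_sum_prod_mul_det_submatrix {m n : Type*} [Fintype m] [DecidableEq m]
    [Fintype n] (A : Matrix m n R) (B : Matrix n m R) :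
    (A * B).det = ∑ f : m → n, (∏ i, A i (f i)) * (B.submatrix f id).det := by
  have hrows : (A * B).det = detRowAlternating (fun i => ∑ k, A i k • B k) := by
    congr 1
    ext i j
    simp [mul_apply]
  rw [hrows, ← AlternatingMap.coe_multilinearMap, MultilinearMap.map_sum]
  exact sum_congr rfl fun f _ =>
    detRowAlternating.toMultilinearMap.map_smul_univ (fun i => A i (f i)) (fun i => B (f i))

theorem det_mul_eq_sum_injective {m n : Type*} [Fintype m] [DecidableEq m] [Fintype n]
    [DecidableEq n] (A : Matrix m n R) (B : Matrix n m R) :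
    (A * B).det = ∑ f ∈ univ.filter Function.Injective,
      (∏ i, A i (f i)) * (B.submatrix f id).det := by
  rw [det_mul_eq_sum_prod_mul_det_submatrix, sum_filter_of_ne]
  intro f _ hf
  by_contra hinj
  obtain ⟨i, j, hfij, hij⟩ := Function.not_injective_iff.mp hinj
  exact hf (by rw [det_zero_of_row_eq hij (funext fun _ => by simp [hfij]), mul_zero])

open scoped Classical in
theorem det_mul_eq_sum_strictMono {l : ℕ} {n : Type*} [Fintype n] [LinearOrder n]
    (A : Matrix (Fin l) n R) (B : Matrix n (Fin l) R) :
    (A * B).det = ∑ g ∈ univ.filter (StrictMono : (Fin l → n) → Prop),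
      (A.submatrix id g).det * (B.submatrix g id).det := by
  calc (A * B).det
      = ∑ p ∈ univ.filter (StrictMono : (Fin l → n) → Prop) ×ˢ univ.filter Function.Injective,
          (∏ i, A i (p.1 (p.2 i))) * (B.submatrix (p.1 ∘ p.2) id).det := by
        rw [det_mul_eq_sum_injective]
        symm
        refine sum_nbij (fun p => p.1 ∘ p.2) ?_ ?_ ?_ fun _ _ => rfl
        · simp only [mem_product, mem_filter, mem_univ, true_and]
          exact fun p hp => hp.1.injective.comp hp.2
        · rintro ⟨g, h⟩ hgh ⟨g', h'⟩ hgh' heq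
          simp only [mem_coe, mem_product, mem_filter, mem_univ, true_and] at hgh hgh'
          simpa [Prod.ext_iff] using (hgh.1.comp_eq_comp_iff hgh'.1 hgh.2 hgh'.2).mp heq
        · intro f hf
          simp only [mem_coe, mem_filter, mem_univ, true_and] at hf
          obtain ⟨g, hg, h, hh, rfl⟩ := hf.exists_strictMono_comp_eq
          exact ⟨(g, h), by simp [hg, hh], rfl⟩
    _ = ∑ g ∈ univ.filter (StrictMono : (Fin l → n) → Prop),
          ((A.submatrix id g) * (B.submatrix g id)).det := by
        rw [sum_product]
        -- the inner sum over `h` is the expansion of `det (A_g * B_g)`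
        refine sum_congr rfl fun g _ => ?_
        rw [det_mul_eq_sum_injective]
        rfl
    _ = _ := sum_congr rfl fun g _ => det_mul _ _

open scoped Classical in
theorem det_conjTranspose_mul_diagonal_mul {l : ℕ} {n : Type*} [Fintype n] [LinearOrder n]
    (W : Matrix n (Fin l) ℂ) (d : n → ℝ) :
    (Wᴴ * diagonal (fun i => (d i : ℂ)) * W).det =
      ((∑ g ∈ univ.filter (StrictMono : (Fin l → n) → Prop),
        (∏ j, d (g j)) * Complex.normSq (W.submatrix g id).det : ℝ) : ℂ) := by
  rw [det_mul_eq_sum_strictMono]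
  push_cast
  refine sum_congr rfl fun g _ => ?_
  have hsub : (Wᴴ * diagonal (fun i => (d i : ℂ))).submatrix id g =
      (W.submatrix g id)ᴴ * diagonal (fun j => (d (g j) : ℂ)) := by
    ext i j
    simp [mul_diagonal, conjTranspose_apply]
  rw [hsub, det_mul, det_conjTranspose, det_diagonal, Complex.star_def,
    Complex.normSq_eq_conj_mul_self]
  ring

open scoped Classical in
theorem sum_normSq_det_submatrix_eq_one {l : ℕ} {n : Type*} [Fintype n] [LinearOrder n]
    {W : Matrix n (Fin l) ℂ} (hW : Wᴴ * W = 1) :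
    ∑ g ∈ univ.filter (StrictMono : (Fin l → n) → Prop),
      Complex.normSq (W.submatrix g id).det = 1 := by
  have h := det_conjTranspose_mul_diagonal_mul W 1
  simp only [Pi.one_apply, Complex.ofReal_one, diagonal_one, Matrix.mul_one, hW, det_one,
    prod_const_one, one_mul] at h
  exact_mod_cast h.symm

open scoped Classical in
theorem one_le_re_det_conjTranspose_mul_diagonal_mul {l : ℕ} {n : Type*} [Fintype n]
    [LinearOrder n] {W : Matrix n (Fin l) ℂ} (hW : Wᴴ * W = 1) {d : n → ℝ} (hd : ∀ i, 1 ≤ d i) :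
    1 ≤ (Wᴴ * diagonal (fun i => (d i : ℂ)) * W).det.re := by
  rw [det_conjTranspose_mul_diagonal_mul, Complex.ofReal_re]
  calc (1 : ℝ) = ∑ g ∈ univ.filter (StrictMono : (Fin l → n) → Prop),
        Complex.normSq (W.submatrix g id).det := (sum_normSq_det_submatrix_eq_one hW).symm
    _ ≤ _ := sum_le_sum fun g _ =>
        le_mul_of_one_le_left (Complex.normSq_nonneg _) (one_le_prod fun j _ => hd (g j))

theorem re_det_conjTranspose_mul_diagonal_mul_le {l n : ℕ} (h : l ≤ n)
    {W : Matrix (Fin n) (Fin l) ℂ} (hW : Wᴴ * W = 1) {d : Fin n → ℝ} (hd : Antitone d)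
    (hd0 : ∀ i, 0 ≤ d i) :
    (Wᴴ * diagonal (fun i => (d i : ℂ)) * W).det.re ≤ ∏ j, d (Fin.castLE h j) := by
  classical
  rw [det_conjTranspose_mul_diagonal_mul, Complex.ofReal_re]
  calc _ ≤ ∑ g ∈ univ.filter (StrictMono : (Fin l → Fin n) → Prop),
        (∏ j, d (Fin.castLE h j)) * Complex.normSq (W.submatrix g id).det :=
        sum_le_sum fun g hg => mul_le_mul_of_nonneg_right
          (Fin.prod_comp_strictMono_le h hd hd0 (mem_filter.mp hg).2) (Complex.normSq_nonneg _)
    _ = _ := by rw [← mul_sum, sum_normSq_det_submatrix_eq_one hW, mul_one]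

end Matrix

theorem sum_filter_log_le_log_prod_sub_log {n l : ℕ} (h : l ≤ n) {c : Fin n → ℝ}
    (hc : ∀ i, 1 ≤ c i) {x : ℝ} (hx : 0 < x) (hxc : x ≤ ∏ j, c (Fin.castLE h j)) :
    ∑ i ∈ univ.filter (fun i : Fin n => l ≤ (i : ℕ)), Real.log (c i) ≤
      Real.log (∏ i, c i) - Real.log x := by
  have hc0 : ∀ i, c i ≠ 0 := fun i => (zero_lt_one.trans_le (hc i)).ne'
  have hsplit := sum_filter_add_sum_filter_not univ (fun i : Fin n => (i : ℕ) < l)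
    fun i => Real.log (c i)
  simp only [not_lt, Fin.sum_filter_val_lt h] at hsplit
  have hlogx : Real.log x ≤ ∑ j : Fin l, Real.log (c (Fin.castLE h j)) := by
    rw [← Real.log_prod fun j _ => hc0 _]
    exact Real.log_le_log hx hxc
  rw [Real.log_prod fun i _ => hc0 i]
  linarith

theorem logdet_compression_lower_bound_general {n ℓ k : ℕ} (hkℓ : k ≤ ℓ) (hℓn : ℓ ≤ n)
    (A : Matrix (Fin n) (Fin n) ℂ)
    (ev : Fin n → ℝ) (hanti : Antitone ev) (hnonneg : ∀ i, 0 ≤ ev i)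
    (U : Matrix.unitaryGroup (Fin n) ℂ)
    (hspec : A = (U : Matrix (Fin n) (Fin n) ℂ) * Matrix.diagonal (fun i => (ev i : ℂ)) *
      star (U : Matrix (Fin n) (Fin n) ℂ))
    (Q : Matrix (Fin n) (Fin ℓ) ℂ) (hQ : Qᴴ * Q = 1) :
    Real.log (((1 : Matrix (Fin n) (Fin n) ℂ) + A).det).re -
      Real.log (((1 : Matrix (Fin ℓ) (Fin ℓ) ℂ) + Qᴴ * A * Q).det).re ≥
      (∑ j ∈ Finset.univ.filter (fun j : Fin n => k ≤ (j : ℕ)), Real.log (1 + ev j)) -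
      (∑ j ∈ Finset.univ.filter (fun j : Fin n => k ≤ (j : ℕ) ∧ (j : ℕ) < ℓ),
        Real.log (1 + ev j)) ∧
    (∑ j ∈ Finset.univ.filter (fun j : Fin n => k ≤ (j : ℕ)), Real.log (1 + ev j)) -
      (∑ j ∈ Finset.univ.filter (fun j : Fin n => k ≤ (j : ℕ) ∧ (j : ℕ) < ℓ),
        Real.log (1 + ev j)) ≥ 0 := by
  set C : Matrix (Fin n) (Fin n) ℂ := diagonal fun i => ((1 + ev i : ℝ) : ℂ)
  set V : Matrix (Fin n) (Fin n) ℂ := ↑U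
  set W := Vᴴ * Q
  have hVV : V * Vᴴ = 1 := U.2.2
  have hA : 1 + A = V * C * Vᴴ := by
    have hC : C = 1 + diagonal fun i => (ev i : ℂ) := by
      simp only [C, ← diagonal_one, diagonal_add, Complex.ofReal_add, Complex.ofReal_one]
    rw [hC, hspec, star_eq_conjTranspose, Matrix.mul_add, Matrix.add_mul, Matrix.mul_one, hVV]
  have hW : Wᴴ * W = 1 := by
    rw [conjTranspose_mul, conjTranspose_conjTranspose, Matrix.mul_assoc,
      ← Matrix.mul_assoc V, hVV, Matrix.one_mul, hQ]
  have hQAQ : 1 + Qᴴ * A * Q = Wᴴ * C * W := by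
    calc 1 + Qᴴ * A * Q = Qᴴ * (1 + A) * Q := by
          rw [Matrix.mul_add, Matrix.add_mul, Matrix.mul_one, hQ]
      _ = Wᴴ * C * W := by
        simp only [hA, W, conjTranspose_mul, conjTranspose_conjTranspose, Matrix.mul_assoc]
  have hdetA : (1 + A).det.re = ∏ i, (1 + ev i) := by
    rw [hA, det_mul, det_mul, mul_right_comm, ← det_mul, hVV, det_one, one_mul, det_diagonal,
      ← Complex.ofReal_prod, Complex.ofReal_re]
  have hd1 : ∀ i, 1 ≤ 1 + ev i := fun i => le_add_of_nonneg_right (hnonneg i)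
  have hlower := one_le_re_det_conjTranspose_mul_diagonal_mul hW hd1
  have hupper := re_det_conjTranspose_mul_diagonal_mul_le hℓn hW (d := fun i => 1 + ev i)
    (hanti.const_add 1) fun i => zero_le_one.trans (hd1 i)
  rw [Fin.sum_filter_le_sub_sum_filter_le_lt hkℓ, hdetA, hQAQ]
  exact ⟨sum_filter_log_le_log_prod_sub_log hℓn hd1 (zero_lt_one.trans_le hlower) hupper,
    sum_nonneg fun i _ => Real.log_nonneg (hd1 i)⟩

/-- Lower bound for the logdet deficit of a compression: with decreasing eigenvalues
`ev` of `A` (0-based, so 1-based `λ_j = ev (j-1)`), `k ≤ ℓ ≤ n`, and `Q` with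
orthonormal columns:
`log det(I_n + A) − log det(I_ℓ + Qᴴ A Q) ≥ ∑_{j=k+1}^{n} log(1+λ_j) − ∑_{j=k+1}^{ℓ} log(1+λ_j) ≥ 0`. -/
theorem logdet_compression_lower_bound {n ℓ k : ℕ} (hk : 1 ≤ k) (hkℓ : k ≤ ℓ) (hℓn : ℓ ≤ n)
    (A : Matrix (Fin n) (Fin n) ℂ) (hA : A.PosSemidef)
    (ev : Fin n → ℝ) (hanti : Antitone ev) (hnonneg : ∀ i, 0 ≤ ev i)
    (U : Matrix.unitaryGroup (Fin n) ℂ)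
    (hspec : A = (U : Matrix (Fin n) (Fin n) ℂ) * Matrix.diagonal (fun i => (ev i : ℂ)) *
      star (U : Matrix (Fin n) (Fin n) ℂ))
    (Q : Matrix (Fin n) (Fin ℓ) ℂ) (hQ : Qᴴ * Q = 1) :
    Real.log (((1 : Matrix (Fin n) (Fin n) ℂ) + A).det).re -
      Real.log (((1 : Matrix (Fin ℓ) (Fin ℓ) ℂ) + Qᴴ * A * Q).det).re ≥
      (∑ j ∈ Finset.univ.filter (fun j : Fin n => k ≤ (j : ℕ)), Real.log (1 + ev j)) -
      (∑ j ∈ Finset.univ.filter (fun j : Fin n => k ≤ (j : ℕ) ∧ (j : ℕ) < ℓ),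
        Real.log (1 + ev j)) ∧
    (∑ j ∈ Finset.univ.filter (fun j : Fin n => k ≤ (j : ℕ)), Real.log (1 + ev j)) -
      (∑ j ∈ Finset.univ.filter (fun j : Fin n => k ≤ (j : ℕ) ∧ (j : ℕ) < ℓ),
        Real.log (1 + ev j)) ≥ 0 :=
  logdet_compression_lower_bound_general hkℓ hℓn A ev hanti hnonneg U hspec Q hQ
end
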